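/- The overlattice of D₄(2) ⊕ (U²⊕U(2)⊕D₄(2)⊕⟨-2⟩²) generated by adjoining the four glue vectors (d₁+d₂+e₂+e₄)/2, (d₂+d₃+e₄)/2, (d₂+e₁+e₃+e₄)/2, (d₄+e₂+e₃+e₄)/2 is an even lattice isometric to Λ_N = U(2)³⊕E8⊕⟨-2⟩². -/

import Mathlib

open Matrix

def G0 : Matrix (Fin 16) (Fin 16) ℤ :=
  !![-4, 0, 2, 0, 0, 0, 0, 0, 0, 0, 0, 0, 0, 0, 0, 0;
    0, -4, 2, 0, 0, 0, 0, 0, 0, 0, 0, 0, 0, 0, 0, 0;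
    2, 2, -4, 2, 0, 0, 0, 0, 0, 0, 0, 0, 0, 0, 0, 0;
    0, 0, 2, -4, 0, 0, 0, 0, 0, 0, 0, 0, 0, 0, 0, 0;
    0, 0, 0, 0, 0, 1, 0, 0, 0, 0, 0, 0, 0, 0, 0, 0;
    0, 0, 0, 0, 1, 0, 0, 0, 0, 0, 0, 0, 0, 0, 0, 0;
    0, 0, 0, 0, 0, 0, 0, 1, 0, 0, 0, 0, 0, 0, 0, 0;
    0, 0, 0, 0, 0, 0, 1, 0, 0, 0, 0, 0, 0, 0, 0, 0;
    0, 0, 0, 0, 0, 0, 0, 0, 0, 2, 0, 0, 0, 0, 0, 0;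
    0, 0, 0, 0, 0, 0, 0, 0, 2, 0, 0, 0, 0, 0, 0, 0;
    0, 0, 0, 0, 0, 0, 0, 0, 0, 0, -4, 0, 2, 0, 0, 0;
    0, 0, 0, 0, 0, 0, 0, 0, 0, 0, 0, -4, 2, 0, 0, 0;
    0, 0, 0, 0, 0, 0, 0, 0, 0, 0, 2, 2, -4, 2, 0, 0;
    0, 0, 0, 0, 0, 0, 0, 0, 0, 0, 0, 0, 2, -4, 0, 0;
    0, 0, 0, 0, 0, 0, 0, 0, 0, 0, 0, 0, 0, 0, -2, 0;
    0, 0, 0, 0, 0, 0, 0, 0, 0, 0, 0, 0, 0, 0, 0, -2]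

def GN : Matrix (Fin 16) (Fin 16) ℤ :=
  !![-2, 0, 0, 0, 0, 0, 0, 0, 0, 0, 0, 0, 0, 0, 0, 0;
    0, -2, 0, 0, 0, 0, 0, 0, 0, 0, 0, 0, 0, 0, 0, 0;
    0, 0, 0, 2, 0, 0, 0, 0, 0, 0, 0, 0, 0, 0, 0, 0;
    0, 0, 2, 0, 0, 0, 0, 0, 0, 0, 0, 0, 0, 0, 0, 0;
    0, 0, 0, 0, 0, 2, 0, 0, 0, 0, 0, 0, 0, 0, 0, 0;
    0, 0, 0, 0, 2, 0, 0, 0, 0, 0, 0, 0, 0, 0, 0, 0;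
    0, 0, 0, 0, 0, 0, 0, 2, 0, 0, 0, 0, 0, 0, 0, 0;
    0, 0, 0, 0, 0, 0, 2, 0, 0, 0, 0, 0, 0, 0, 0, 0;
    0, 0, 0, 0, 0, 0, 0, 0, -2, 0, 0, 1, 0, 0, 0, 0;
    0, 0, 0, 0, 0, 0, 0, 0, 0, -2, 1, 0, 0, 0, 0, 0;
    0, 0, 0, 0, 0, 0, 0, 0, 0, 1, -2, 1, 0, 0, 0, 0;
    0, 0, 0, 0, 0, 0, 0, 0, 1, 0, 1, -2, 1, 0, 0, 0;
    0, 0, 0, 0, 0, 0, 0, 0, 0, 0, 0, 1, -2, 1, 0, 0;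
    0, 0, 0, 0, 0, 0, 0, 0, 0, 0, 0, 0, 1, -2, 1, 0;
    0, 0, 0, 0, 0, 0, 0, 0, 0, 0, 0, 0, 0, 1, -2, 1;
    0, 0, 0, 0, 0, 0, 0, 0, 0, 0, 0, 0, 0, 0, 1, -2]

def glue : Fin 4 → (Fin 16 → ℚ) :=
  ![![1/2,1/2,0,0,0,0,0,0,0,0,0,1/2,0,1/2,0,0],
    ![0,1/2,1/2,0,0,0,0,0,0,0,0,0,0,1/2,0,0],
    ![0,1/2,0,0,0,0,0,0,0,0,1/2,0,1/2,1/2,0,0],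
    ![0,0,0,1/2,0,0,0,0,0,0,0,1/2,1/2,1/2,0,0]]

/-- The rational extension of the Gram matrix. -/
def GQ : Matrix (Fin 16) (Fin 16) ℚ := G0.map (Int.cast : ℤ → ℚ)

/-- The overlattice generated by `ℤ¹⁶` together with the glue vectors. -/
def OL : Submodule ℤ (Fin 16 → ℚ) :=
  Submodule.span ℤ
    (Set.range (fun i : Fin 16 => (Pi.single i 1 : Fin 16 → ℚ)) ∪ Set.range glue)

def B2m : Matrix (Fin 16) (Fin 16) ℤ :=
  !![0, 0, 0, 0, 0, 0, 0, 0, 0, 0, 0, 0, 0, 0, 2, 0;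
    0, 0, 0, 0, 0, 0, 0, 0, 0, 0, 0, 0, 0, 0, 0, 2;
    2, 4, 2, 2, -4, -12, -4, -4, 0, 0, -4, 2, -2, 0, 0, 0;
    -1, -2, -2, 3, -4, 0, 8, 12, 0, 0, 3, 2, 4, -3, 0, 0;
    -6, -8, -8, 0, 0, 16, 16, 24, 0, 0, 8, -2, 6, -6, 0, 0;
    -877, -1153, -1144, -2, 0, 2324, 2284, 3444, 0, 0, 1144, -285, 868, -847, 0, 0;
    0, 0, 0, 0, 0, 0, 0, 0, 2, 0, 0, 0, 0, 0, 0, 0;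
    0, 0, 0, 0, 0, 0, 0, 0, 0, 2, 0, 0, 0, 0, 0, 0;
    -84, -111, -111, -1, 0, 222, 220, 330, 0, 0, 110, -27, 83, -82, 0, 0;
    -57, -76, -75, 1, 0, 154, 152, 230, 0, 0, 76, -20, 57, -57, 0, 0;
    17, 24, 23, 0, 0, -48, -46, -70, 0, 0, -22, 7, -16, 18, 0, 0;
    48, 63, 63, 2, -2, -130, -124, -186, 0, 0, -64, 16, -48, 45, 0, 0;
    1, 1, 1, -2, 2, 2, -4, -8, 0, 0, -1, -1, -1, 3, 0, 0;
    -2, -3, -2, -1, 2, 6, 4, 8, 0, 0, 3, -1, 2, -2, 0, 0;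
    5, 7, 6, 2, -4, -14, -10, -14, 0, 0, -6, 3, -4, 3, 0, 0;
    -2, -3, -3, -1, 2, 4, 2, 4, 0, 0, 2, -1, 1, 0, 0, 0]

def glueZ : Matrix (Fin 4) (Fin 16) ℤ :=
  !![1, 1, 0, 0, 0, 0, 0, 0, 0, 0, 0, 1, 0, 1, 0, 0;
    0, 1, 1, 0, 0, 0, 0, 0, 0, 0, 0, 0, 0, 1, 0, 0;
    0, 1, 0, 0, 0, 0, 0, 0, 0, 0, 1, 0, 1, 1, 0, 0;
    0, 0, 0, 1, 0, 0, 0, 0, 0, 0, 0, 1, 1, 1, 0, 0]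

def P1m : Matrix (Fin 16) (Fin 16) ℤ :=
  !![0, 0, 0, 0, 0, 0, 0, 0, 0, 0, 0, 0, 0, 0, 1, 0;
    0, 0, 0, 0, 0, 0, 0, 0, 0, 0, 0, 0, 0, 0, 0, 1;
    1, 2, 1, 1, -2, -6, -2, -2, 0, 0, -2, 1, -1, 0, 0, 0;
    -1, -2, -1, 1, -2, 0, 4, 6, 0, 0, 1, 0, 1, -3, 0, 0;
    -3, -4, -4, 0, 0, 8, 8, 12, 0, 0, 4, -1, 3, -3, 0, 0;
    -439, -577, -572, -1, 0, 1162, 1142, 1722, 0, 0, 572, -143, 434, -424, 0, 0;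
    0, 0, 0, 0, 0, 0, 0, 0, 1, 0, 0, 0, 0, 0, 0, 0;
    0, 0, 0, 0, 0, 0, 0, 0, 0, 1, 0, 0, 0, 0, 0, 0;
    -42, -56, -56, -1, 0, 111, 110, 165, 0, 0, 55, -14, 41, -42, 0, 0;
    -29, -39, -38, 0, 0, 77, 76, 115, 0, 0, 38, -11, 28, -30, 0, 0;
    8, 11, 11, 0, 0, -24, -23, -35, 0, 0, -11, 3, -8, 8, 0, 0;
    24, 31, 31, 1, -1, -65, -62, -93, 0, 0, -32, 8, -24, 22, 0, 0;
    0, -1, 0, -1, 1, 1, -2, -4, 0, 0, -1, -1, -1, 0, 0, 0;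
    -1, -2, -1, -1, 1, 3, 2, 4, 0, 0, 1, -1, 0, -2, 0, 0;
    2, 3, 3, 1, -2, -7, -5, -7, 0, 0, -3, 1, -2, 1, 0, 0;
    -1, -2, -2, -1, 1, 2, 1, 2, 0, 0, 1, -1, 0, -1, 0, 0]

def P2m : Matrix (Fin 16) (Fin 4) ℤ :=
  !![0, 0, 0, 0;
    0, 0, 0, 0;
    0, 0, 0, 0;
    1, 0, 1, 1;
    0, 0, 0, 0;
    1, 0, 0, 0;
    0, 0, 0, 0;
    0, 0, 0, 0;
    0, 1, 0, 1;
    1, 1, 0, 1;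
    1, 1, 0, 0;
    0, 1, 0, 0;
    1, 1, 1, 0;
    0, 0, 1, 1;
    1, 0, 0, 0;
    0, 1, 0, 1]

def Q1m : Matrix (Fin 16) (Fin 16) ℤ :=
  !![0, 0, 0, -1, 305, 2, 0, 0, -31, -24, -9, -5, -3, -2, 1, 0;
    0, 0, 1, -3, 581, 4, 0, 0, -63, -48, -19, -15, -11, -8, -1, -2;
    0, 0, 2, 2, 128, 1, 0, 0, -23, -17, -16, -20, -14, -10, -8, -4;
    0, 0, -4, -1, -570, -4, 0, 0, 73, 56, 35, 37, 25, 18, 11, 6;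
    0, 0, 0, -3, 581, 4, 0, 0, -61, -47, -17, -11, -9, -6, 0, -1;
    0, 0, -1, -1, 0, 0, 0, 0, 3, 2, 4, 6, 4, 3, 3, 1;
    0, 0, 3, -1, 861, 6, 0, 0, -102, -78, -41, -39, -28, -21, -10, -6;
    0, 0, 2, -1, 571, 4, 0, 0, -67, -51, -26, -24, -17, -12, -5, -3;
    0, 0, 0, 0, 0, 0, 1, 0, 0, 0, 0, 0, 0, 0, 0, 0;
    0, 0, 0, 0, 0, 0, 0, 1, 0, 0, 0, 0, 0, 0, 0, 0;
    0, 0, -1, 3, -710, -5, 0, 0, 76, 59, 23, 15, 11, 8, 1, 2;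
    0, 0, 0, -3, 719, 5, 0, 0, -78, -61, -25, -19, -15, -10, -1, -2;
    0, 0, -3, 1, -862, -6, 0, 0, 105, 80, 45, 45, 33, 24, 11, 6;
    0, 0, 5, -1, 1281, 9, 0, 0, -154, -117, -63, -61, -43, -32, -15, -8;
    1, 0, 0, 0, 0, 0, 0, 0, 0, 0, 0, 0, 0, 0, 0, 0;
    0, 1, 0, 0, 0, 0, 0, 0, 0, 0, 0, 0, 0, 0, 0, 0]

def Q2m : Matrix (Fin 4) (Fin 16) ℤ :=
  !![0, 0, 3, -4, 1443, 10, 0, 0, -163, -125, -58, -50, -36, -26, -8, -6;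
    0, 0, 4, -1, 995, 7, 0, 0, -120, -91, -49, -48, -34, -25, -12, -7;
    0, 0, 1, 0, 145, 1, 0, 0, -18, -13, -7, -8, -5, -4, -2, -1;
    0, 0, -1, -2, 284, 2, 0, 0, -27, -21, -4, 1, 0, 0, 3, 1]

def Czm : Matrix (Fin 16) (Fin 16) ℤ :=
  !![0, 0, -4, 0, 8, 1220, 0, 0, 114, 78, -22, -66, -2, 4, -8, 2;
    0, 0, -12, 4, 16, 2324, 0, 0, 222, 154, -50, -126, -2, 8, -16, 6;
    0, 0, 8, 8, 4, 512, 0, 0, 52, 36, -10, -26, -4, -4, 4, 0;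
    0, 0, -4, -16, -16, -2280, 0, 0, -218, -154, 46, 118, 10, 0, 4, -2;
    0, 0, -12, 0, 16, 2324, 0, 0, 222, 154, -48, -130, 2, 6, -14, 4;
    0, 0, -4, -4, 0, 0, 0, 0, 0, 0, 0, -2, 2, 2, -4, 2;
    0, 0, -4, 12, 24, 3444, 0, 0, 330, 230, -70, -186, -8, 8, -14, 4;
    0, 0, -4, 8, 16, 2284, 0, 0, 220, 152, -46, -124, -4, 4, -10, 2;
    0, 0, 0, 0, 0, 0, 0, 4, 0, 0, 0, 0, 0, 0, 0, 0;
    0, 0, 0, 0, 0, 0, 4, 0, 0, 0, 0, 0, 0, 0, 0, 0;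
    0, 0, 12, -4, -20, -2840, 0, 0, -274, -190, 56, 160, 2, -8, 16, -6;
    0, 0, -12, 0, 20, 2876, 0, 0, 274, 194, -60, -160, 2, 8, -20, 6;
    0, 0, 4, -12, -24, -3448, 0, 0, -330, -230, 70, 186, 6, -8, 16, -2;
    0, 0, -4, 20, 36, 5124, 0, 0, 494, 342, -104, -276, -14, 12, -20, 2;
    -4, 0, 0, 0, 0, 0, 0, 0, 0, 0, 0, 0, 0, 0, 0, 0;
    0, -4, 0, 0, 0, 0, 0, 0, 0, 0, 0, 0, 0, 0, 0, 0]

def GN4 : Matrix (Fin 16) (Fin 16) ℤ :=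
  !![-8, 0, 0, 0, 0, 0, 0, 0, 0, 0, 0, 0, 0, 0, 0, 0;
    0, -8, 0, 0, 0, 0, 0, 0, 0, 0, 0, 0, 0, 0, 0, 0;
    0, 0, 0, 8, 0, 0, 0, 0, 0, 0, 0, 0, 0, 0, 0, 0;
    0, 0, 8, 0, 0, 0, 0, 0, 0, 0, 0, 0, 0, 0, 0, 0;
    0, 0, 0, 0, 0, 8, 0, 0, 0, 0, 0, 0, 0, 0, 0, 0;
    0, 0, 0, 0, 8, 0, 0, 0, 0, 0, 0, 0, 0, 0, 0, 0;
    0, 0, 0, 0, 0, 0, 0, 8, 0, 0, 0, 0, 0, 0, 0, 0;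
    0, 0, 0, 0, 0, 0, 8, 0, 0, 0, 0, 0, 0, 0, 0, 0;
    0, 0, 0, 0, 0, 0, 0, 0, -8, 0, 0, 4, 0, 0, 0, 0;
    0, 0, 0, 0, 0, 0, 0, 0, 0, -8, 4, 0, 0, 0, 0, 0;
    0, 0, 0, 0, 0, 0, 0, 0, 0, 4, -8, 4, 0, 0, 0, 0;
    0, 0, 0, 0, 0, 0, 0, 0, 4, 0, 4, -8, 4, 0, 0, 0;
    0, 0, 0, 0, 0, 0, 0, 0, 0, 0, 0, 4, -8, 4, 0, 0;
    0, 0, 0, 0, 0, 0, 0, 0, 0, 0, 0, 0, 4, -8, 4, 0;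
    0, 0, 0, 0, 0, 0, 0, 0, 0, 0, 0, 0, 0, 4, -8, 4;
    0, 0, 0, 0, 0, 0, 0, 0, 0, 0, 0, 0, 0, 0, 4, -8]

def Emat : Matrix (Fin 16) (Fin 16) ℤ :=
  !![-1, 0, 0, 0, 0, 0, 0, 0, 0, 0, 0, 0, 0, 0, 0, 0;
    0, -1, 0, 0, 0, 0, 0, 0, 0, 0, 0, 0, 0, 0, 0, 0;
    0, 0, 0, 2, 0, 0, 0, 0, 0, 0, 0, 0, 0, 0, 0, 0;
    0, 0, 0, 0, 0, 0, 0, 0, 0, 0, 0, 0, 0, 0, 0, 0;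
    0, 0, 0, 0, 0, 2, 0, 0, 0, 0, 0, 0, 0, 0, 0, 0;
    0, 0, 0, 0, 0, 0, 0, 0, 0, 0, 0, 0, 0, 0, 0, 0;
    0, 0, 0, 0, 0, 0, 0, 2, 0, 0, 0, 0, 0, 0, 0, 0;
    0, 0, 0, 0, 0, 0, 0, 0, 0, 0, 0, 0, 0, 0, 0, 0;
    0, 0, 0, 0, 0, 0, 0, 0, -1, 0, 0, 1, 0, 0, 0, 0;
    0, 0, 0, 0, 0, 0, 0, 0, 0, -1, 1, 0, 0, 0, 0, 0;
    0, 0, 0, 0, 0, 0, 0, 0, 0, 0, -1, 1, 0, 0, 0, 0;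
    0, 0, 0, 0, 0, 0, 0, 0, 0, 0, 0, -1, 1, 0, 0, 0;
    0, 0, 0, 0, 0, 0, 0, 0, 0, 0, 0, 0, -1, 1, 0, 0;
    0, 0, 0, 0, 0, 0, 0, 0, 0, 0, 0, 0, 0, -1, 1, 0;
    0, 0, 0, 0, 0, 0, 0, 0, 0, 0, 0, 0, 0, 0, -1, 1;
    0, 0, 0, 0, 0, 0, 0, 0, 0, 0, 0, 0, 0, 0, 0, -1]

def castv (v : Fin 16 → ℤ) : Fin 16 → ℚ := fun t => (v t : ℚ)

def bb : Fin 16 → Fin 16 → ℚ := fun i => (2:ℚ)⁻¹ • castv (B2m i)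

def casth : (Fin 16 → ℤ) →+ (Fin 16 → ℚ) where
  toFun := castv
  map_zero' := by funext t; simp [castv]
  map_add' := by intro u v; funext t; simp [castv]

lemma castv_zsmul (c : ℤ) (v : Fin 16 → ℤ) : castv (c • v) = (c : ℚ) • castv v := by
  funext t; simp [castv]

lemma castv_single (j : Fin 16) : castv (Pi.single j 1) = Pi.single j (1:ℚ) := by
  funext t; simp [castv, Pi.single_apply, apply_ite (Int.cast : ℤ → ℚ)]

lemma castv_glueZ (k : Fin 4) : castv (glueZ k) = (2:ℚ) • glue k := by
  fin_cases k <;> funext t <;> fin_cases t <;> norm_num [castv, glueZ, glue]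

lemma castv_mulVec (v : Fin 16 → ℤ) : castv (G0 *ᵥ v) = GQ *ᵥ castv v := by
  funext t
  have := RingHom.map_mulVec (Int.castRingHom ℚ) G0 v t
  exact this

lemma castv_dot (u v : Fin 16 → ℤ) : ((u ⬝ᵥ v : ℤ) : ℚ) = castv u ⬝ᵥ castv v := by
  have := RingHom.map_dotProduct (Int.castRingHom ℚ) u v
  exact this

-- integer facts by kernel computation
set_option maxHeartbeats 2000000 in
lemma hA1 : ∀ i, B2m i = (∑ j, (2 * P1m i j) • Pi.single j (1:ℤ)) + ∑ k, P2m i k • glueZ k := by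
  exact @of_decide_eq_true _ (@Fintype.decidableForallFintype _ _ (fun _ => Fintype.decidablePiFintype _ _) _) rfl

set_option maxHeartbeats 2000000 in
lemma hA2 : ∀ j : Fin 16, ((2:ℤ) • Pi.single j (1:ℤ) : Fin 16 → ℤ) = ∑ i, Q1m j i • B2m i := by
  decide

lemma hA3 : ∀ k, glueZ k = ∑ i, Q2m k i • B2m i := by exact @of_decide_eq_true _ (@Fintype.decidableForallFintype _ _ (fun _ => Fintype.decidablePiFintype _ _) _) rfl

lemma hC1 : G0 * B2mᵀ = Czm := by decide

lemma hC2 : B2m * Czm = GN4 := by decide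

lemma hGN4 : ∀ i j, GN4 i j = 4 * GN i j := by
  exact @of_decide_eq_true _ (@Fintype.decidableForallFintype _ _ (fun _ => @Fintype.decidableForallFintype _ _ (fun _ => Int.decEq _ _) _) _) rfl

lemma hEmat : Emat + Ematᵀ = GN := by decide

lemma entry_eq (i j : Fin 16) : (B2m * (G0 * B2mᵀ)) i j = B2m i ⬝ᵥ G0 *ᵥ B2m j := by
  simp only [Matrix.mul_apply, Matrix.mulVec, dotProduct, Matrix.transpose_apply]

lemma hZ (i j : Fin 16) : B2m i ⬝ᵥ G0 *ᵥ B2m j = 4 * GN i j := by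
  rw [← entry_eq, hC1, hC2, hGN4]

lemma keygram (i j : Fin 16) : bb i ⬝ᵥ GQ.mulVec (bb j) = ((GN i j : ℤ) : ℚ) := by
  show ((2:ℚ)⁻¹ • castv (B2m i)) ⬝ᵥ GQ *ᵥ ((2:ℚ)⁻¹ • castv (B2m j)) = _
  rw [Matrix.mulVec_smul, smul_dotProduct, dotProduct_smul,
    ← castv_mulVec, ← castv_dot, hZ]
  simp only [smul_eq_mul]
  push_cast
  ring

lemma sum_dot (f : Fin 16 → (Fin 16 → ℚ)) (w : Fin 16 → ℚ) :
    (∑ i, f i) ⬝ᵥ w = ∑ i, f i ⬝ᵥ w := by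
  simp only [dotProduct, Finset.sum_apply, Finset.sum_mul]
  exact Finset.sum_comm

lemma dot_sum (w : Fin 16 → ℚ) (f : Fin 16 → (Fin 16 → ℚ)) :
    w ⬝ᵥ (∑ i, f i) = ∑ i, w ⬝ᵥ f i := by
  simp only [dotProduct, Finset.sum_apply, Finset.mul_sum]
  exact Finset.sum_comm

lemma mulVec_sum (M : Matrix (Fin 16) (Fin 16) ℚ) (f : Fin 16 → (Fin 16 → ℚ)) :
    M *ᵥ (∑ j, f j) = ∑ j, M *ᵥ f j := by
  funext t
  simp only [Matrix.mulVec, dotProduct, Finset.sum_apply, Finset.mul_sum]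
  exact Finset.sum_comm

lemma key2 (c d : Fin 16 → ℤ) :
    (∑ i, c i • bb i) ⬝ᵥ GQ.mulVec (∑ j, d j • bb j) = ((c ⬝ᵥ GN.mulVec d : ℤ) : ℚ) := by
  simp only [← Int.cast_smul_eq_zsmul ℚ]
  rw [mulVec_sum, sum_dot]
  have h1 : ∀ i, ((c i : ℚ) • bb i) ⬝ᵥ (∑ j, GQ *ᵥ ((d j : ℚ) • bb j))
      = ∑ j, (c i : ℚ) * ((d j : ℚ) * ((GN i j : ℤ) : ℚ)) := by
    intro i
    rw [dot_sum]
    refine Finset.sum_congr rfl fun j _ => ?_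
    rw [Matrix.mulVec_smul, smul_dotProduct, dotProduct_smul,
      smul_eq_mul, smul_eq_mul, keygram]
  rw [Finset.sum_congr rfl fun i _ => h1 i]
  simp only [dotProduct, Matrix.mulVec]
  push_cast
  refine Finset.sum_congr rfl fun i _ => ?_
  rw [Finset.mul_sum]
  refine Finset.sum_congr rfl fun j _ => ?_
  ring

-- span expressions over ℚ
lemma castv_add (u v : Fin 16 → ℤ) : castv (u + v) = castv u + castv v := by
  funext t; simp [castv]

lemma castv_sum {m : Type*} [Fintype m] (f : m → (Fin 16 → ℤ)) :
    castv (∑ i, f i) = ∑ i, castv (f i) :=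
  map_sum casth f Finset.univ

lemma hcombQ (i : Fin 16) :
    bb i = (∑ j, (P1m i j : ℚ) • (Pi.single j 1 : Fin 16 → ℚ)) + ∑ k, (P2m i k : ℚ) • glue k := by
  have h : castv (B2m i)
      = (∑ j, ((2 * P1m i j : ℤ) : ℚ) • (Pi.single j 1 : Fin 16 → ℚ))
        + ∑ k, ((P2m i k : ℤ) : ℚ) • ((2:ℚ) • glue k) := by
    rw [hA1 i, castv_add, castv_sum, castv_sum]
    congr 1
    · exact Finset.sum_congr rfl fun j _ => by rw [castv_zsmul, castv_single]
    · exact Finset.sum_congr rfl fun k _ => by rw [castv_zsmul, castv_glueZ]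
  show (2:ℚ)⁻¹ • castv (B2m i) = _
  rw [h, smul_add, Finset.smul_sum, Finset.smul_sum]
  congr 1
  · refine Finset.sum_congr rfl fun j _ => ?_
    rw [smul_smul]
    congr 1
    push_cast
    ring
  · refine Finset.sum_congr rfl fun k _ => ?_
    rw [smul_smul, smul_smul]
    congr 1
    push_cast
    ring

lemma hsingleQ (j : Fin 16) :
    (Pi.single j 1 : Fin 16 → ℚ) = ∑ i, (Q1m j i : ℚ) • bb i := by
  have h : (2:ℚ) • (Pi.single j 1 : Fin 16 → ℚ) = ∑ i, (Q1m j i : ℚ) • castv (B2m i) := by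
    have h0 := congrArg castv (hA2 j)
    rw [castv_sum, castv_zsmul, castv_single] at h0
    rw [show (((2:ℤ)):ℚ) = (2:ℚ) from by norm_num] at h0
    rw [h0]
    exact Finset.sum_congr rfl fun i _ => castv_zsmul _ _
  have h2 := congrArg (fun v : Fin 16 → ℚ => (2:ℚ)⁻¹ • v) h
  simp only [smul_smul] at h2
  rw [inv_mul_cancel₀ (two_ne_zero), one_smul] at h2
  rw [h2, Finset.smul_sum]
  refine Finset.sum_congr rfl fun i _ => ?_
  rw [smul_comm]
  rfl

lemma hglueQ (k : Fin 4) : glue k = ∑ i, (Q2m k i : ℚ) • bb i := by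
  have h : (2:ℚ) • glue k = ∑ i, (Q2m k i : ℚ) • castv (B2m i) := by
    have h0 := congrArg castv (hA3 k)
    rw [castv_sum, castv_glueZ] at h0
    rw [h0]
    exact Finset.sum_congr rfl fun i _ => castv_zsmul _ _
  have h2 := congrArg (fun v : Fin 16 → ℚ => (2:ℚ)⁻¹ • v) h
  simp only [smul_smul] at h2
  rw [inv_mul_cancel₀ (two_ne_zero), one_smul] at h2
  rw [h2, Finset.smul_sum]
  refine Finset.sum_congr rfl fun i _ => ?_
  rw [smul_comm]
  rfl

lemma hspan : Submodule.span ℤ (Set.range bb) = OL := by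
  apply le_antisymm
  · rw [Submodule.span_le]
    rintro x ⟨i, rfl⟩
    rw [hcombQ i]
    refine Submodule.add_mem _ ?_ ?_
    · refine Submodule.sum_mem _ fun j _ => ?_
      rw [Int.cast_smul_eq_zsmul ℚ]
      exact Submodule.smul_mem _ _ (Submodule.subset_span (Or.inl ⟨j, rfl⟩))
    · refine Submodule.sum_mem _ fun k _ => ?_
      rw [Int.cast_smul_eq_zsmul ℚ]
      exact Submodule.smul_mem _ _ (Submodule.subset_span (Or.inr ⟨k, rfl⟩))
  · rw [OL, Submodule.span_le]
    rintro x (⟨j, rfl⟩ | ⟨k, rfl⟩)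
    · rw [show (fun i : Fin 16 => (Pi.single i 1 : Fin 16 → ℚ)) j = Pi.single j 1 from rfl,
        hsingleQ j]
      refine Submodule.sum_mem _ fun i _ => ?_
      rw [Int.cast_smul_eq_zsmul ℚ]
      exact Submodule.smul_mem _ _ (Submodule.subset_span ⟨i, rfl⟩)
    · rw [hglueQ k]
      refine Submodule.sum_mem _ fun i _ => ?_
      rw [Int.cast_smul_eq_zsmul ℚ]
      exact Submodule.smul_mem _ _ (Submodule.subset_span ⟨i, rfl⟩)

lemma even_int (c : Fin 16 → ℤ) : c ⬝ᵥ GN.mulVec c = 2 * (c ⬝ᵥ Emat.mulVec c) := by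
  rw [← hEmat, Matrix.add_mulVec, dotProduct_add]
  have : c ⬝ᵥ Ematᵀ *ᵥ c = c ⬝ᵥ Emat *ᵥ c := by
    rw [dotProduct_mulVec, Matrix.vecMul_transpose, dotProduct_comm]
  rw [this]; ring
/-- The overlattice of `D₄(2) ⊕ (U² ⊕ U(2) ⊕ D₄(2) ⊕ ⟨-2⟩²)` obtained by adjoining the
four glue vectors is an even integral lattice isometric to `Λ_N = U(2)³ ⊕ E8 ⊕ ⟨-2⟩²`. -/
theorem stmt17 :
    (∀ x ∈ OL, ∀ y ∈ OL, ∃ k : ℤ, x ⬝ᵥ GQ.mulVec y = (k : ℚ)) ∧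
    (∀ x ∈ OL, ∃ k : ℤ, x ⬝ᵥ GQ.mulVec x = 2 * (k : ℚ)) ∧
    (∃ b : Fin 16 → (Fin 16 → ℚ),
      Submodule.span ℤ (Set.range b) = OL ∧
      ∀ i j, b i ⬝ᵥ GQ.mulVec (b j) = ((GN i j : ℤ) : ℚ)) := by
  refine ⟨?_, ?_, bb, hspan, keygram⟩
  · intro x hx y hy
    rw [← hspan] at hx hy
    obtain ⟨c, rfl⟩ := (Submodule.mem_span_range_iff_exists_fun ℤ).mp hx
    obtain ⟨d, rfl⟩ := (Submodule.mem_span_range_iff_exists_fun ℤ).mp hy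
    exact ⟨c ⬝ᵥ GN.mulVec d, key2 c d⟩
  · intro x hx
    rw [← hspan] at hx
    obtain ⟨c, rfl⟩ := (Submodule.mem_span_range_iff_exists_fun ℤ).mp hx
    refine ⟨c ⬝ᵥ Emat.mulVec c, ?_⟩
    rw [key2 c c, even_int c]
    push_cast
    ring
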